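/- Let W be the complete wheel graph on n ≥ 8 vertices. A set L ⊆ C is an NL 2-landmark set of W if and only if it satisfies: for every i, if c_i ∉ L and c_{i+1} ∉ L, then c_{i−2}, c_{i−1}, c_{i+2}, c_{i+3} ∈ L (indices modulo n−1). Moreover md_2^NL(W) = ⌊n/2⌋. -/
import Mathlib


/-- `L` is an NL `k`-landmark set of `G`: every pair of distinct vertices not in `L` is
separated (i.e. has different distances) by at least `k` vertices of `L`. -/
def isNLLandmark {V : Type*} (G : SimpleGraph V) (k : ℕ) (L : Finset V) : Prop :=
  ∀ u v : V, u ≠ v → u ∉ L → v ∉ L →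
    k ≤ (L.filter fun τ => G.dist u τ ≠ G.dist v τ).card

/-- The complete wheel graph with cycle `c_1, …, c_m` (encoded as `some i` for
`i : ZMod m`) and central vertex `h` (encoded as `none`); a wheel on `n` vertices has
`m = n - 1`. -/
def wheelGraph (m : ℕ) : SimpleGraph (Option (ZMod m)) :=
  SimpleGraph.fromRel fun u v => u = none ∨ ∃ i : ZMod m, u = some i ∧ v = some (i + 1)

/-- The NL `k = 2` condition on a set of vertices of the wheel: whenever two consecutive
cycle vertices `c_i, c_{i+1}` are not in `L`, the two cycle vertices preceding them and
the two cycle vertices following them are in `L`. -/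
def nlCond2 (m : ℕ) (L : Finset (Option (ZMod m))) : Prop :=
  ∀ i : ZMod m, some i ∉ L → some (i + 1) ∉ L →
    some (i - 2) ∈ L ∧ some (i - 1) ∈ L ∧ some (i + 2) ∈ L ∧ some (i + 3) ∈ L

namespace WheelAux

variable {m : ℕ}

lemma zmod_int_ne (hm : 7 ≤ m) {a b : ℤ} (h1 : (b - a).natAbs ≤ 6)
    (hab : a ≠ b) : (a : ZMod m) ≠ (b : ZMod m) := by
  intro h
  have hd : (m : ℤ) ∣ b - a := ((ZMod.intCast_eq_intCast_iff _ _ _).mp h).dvd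
  have hd' : m ∣ (b - a).natAbs := by
    have := Int.natAbs_dvd_natAbs.mpr hd
    simpa using this
  have h2 : (b - a).natAbs ≠ 0 := by
    simp only [ne_eq, Int.natAbs_eq_zero, sub_eq_zero]
    exact fun hh => hab hh.symm
  have := Nat.le_of_dvd (Nat.pos_of_ne_zero h2) hd'
  omega

lemma zne (hm : 7 ≤ m) (a b : ℤ) (h1 : (b - a).natAbs ≤ 6) (hab : a ≠ b)
    {i x y : ZMod m} (hx : x = i + (a : ZMod m)) (hy : y = i + (b : ZMod m)) : x ≠ y := by
  subst hx hy
  intro h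
  exact zmod_int_ne hm h1 hab (add_left_cancel h)

lemma zneN (hm : 7 ≤ m) (i : ZMod m) (a b : ℤ) {x y : ZMod m}
    (h1 : (b - a).natAbs ≤ 6 := by decide) (hab : a ≠ b := by decide)
    (hx : x = i + (a : ZMod m) := by push_cast; ring)
    (hy : y = i + (b : ZMod m) := by push_cast; ring) : x ≠ y :=
  zne hm a b h1 hab hx hy

lemma wheel_adj_none (i : ZMod m) : (wheelGraph m).Adj none (some i) := by
  rw [wheelGraph, SimpleGraph.fromRel_adj]
  exact ⟨by simp, Or.inl (Or.inl rfl)⟩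

lemma wheel_adj_some_iff (hm : 7 ≤ m) (i j : ZMod m) :
    (wheelGraph m).Adj (some i) (some j) ↔ (j = i + 1 ∨ i = j + 1) := by
  rw [wheelGraph, SimpleGraph.fromRel_adj]
  constructor
  · rintro ⟨hne, (h | ⟨k, hk1, hk2⟩) | (h | ⟨k, hk1, hk2⟩)⟩
    · exact absurd h (by simp)
    · left
      obtain ⟨rfl⟩ := Option.some.inj hk1
      exact Option.some.inj hk2
    · exact absurd h (by simp)
    · right
      obtain ⟨rfl⟩ := Option.some.inj hk1
      exact Option.some.inj hk2
  · rintro (h | h)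
    · subst h
      refine ⟨?_, Or.inl (Or.inr ⟨i, rfl, rfl⟩)⟩
      have : i ≠ i + 1 := zne hm 0 1 (by decide) (by decide)
        (by push_cast; ring) (by push_cast; ring)
      simpa using this
    · subst h
      refine ⟨?_, Or.inr (Or.inr ⟨j, rfl, rfl⟩)⟩
      have : j ≠ j + 1 := zne hm 0 1 (by decide) (by decide)
        (by push_cast; ring) (by push_cast; ring)
      simpa using this.symm

lemma wheel_dist_none (i : ZMod m) : (wheelGraph m).dist none (some i) = 1 :=
  SimpleGraph.dist_eq_one_iff_adj.mpr (wheel_adj_none i)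

lemma wheel_dist_none' (i : ZMod m) : (wheelGraph m).dist (some i) none = 1 := by
  rw [SimpleGraph.dist_comm]; exact wheel_dist_none i

lemma wheel_dist_some (hm : 7 ≤ m) (i j : ZMod m) (hij : i ≠ j) :
    (wheelGraph m).dist (some i) (some j) = (if j = i + 1 ∨ i = j + 1 then 1 else 2) := by
  split_ifs with h
  · exact SimpleGraph.dist_eq_one_iff_adj.mpr ((wheel_adj_some_iff hm i j).mpr h)
  · have hle : (wheelGraph m).dist (some i) (some j) ≤ 2 := by
      have := SimpleGraph.dist_le
        (((wheel_adj_none i).symm.toWalk.append (wheel_adj_none j).toWalk))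
      simpa using this
    have h0 : (wheelGraph m).dist (some i) (some j) ≠ 0 := by
      intro heq
      rw [SimpleGraph.dist_eq_zero_iff_eq_or_not_reachable] at heq
      rcases heq with heq | hnr
      · exact hij (Option.some.inj heq)
      · exact hnr ⟨(wheel_adj_none i).symm.toWalk.append (wheel_adj_none j).toWalk⟩
    have h1 : (wheelGraph m).dist (some i) (some j) ≠ 1 := by
      intro heq
      exact h ((wheel_adj_some_iff hm i j).mp (SimpleGraph.dist_eq_one_iff_adj.mp heq))
    omega

lemma landmark_to_cond (hm : 7 ≤ m) (L : Finset (Option (ZMod m)))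
    (hL : isNLLandmark (wheelGraph m) 2 L) : nlCond2 m L := by
  intro i h1 h2
  have key1 : some (i - 1) ∈ L ∧ some (i + 2) ∈ L := by
    have hA := hL (some i) (some (i + 1))
      ((Option.some_injective _).ne (zne hm 0 1 (by decide) (by decide)
        (by push_cast; ring) (by push_cast; ring))) h1 h2
    have hsub : (L.filter fun τ =>
        (wheelGraph m).dist (some i) τ ≠ (wheelGraph m).dist (some (i + 1)) τ)
        ⊆ {some (i - 1), some (i + 2)} := by
      intro τ hτ
      rw [Finset.mem_filter] at hτ
      obtain ⟨hτL, hsep⟩ := hτ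
      rcases τ with _ | k
      · exact absurd (by rw [wheel_dist_none', wheel_dist_none']) hsep
      · have h0k : i ≠ k := fun h => h1 (h ▸ hτL)
        have h1k : i + 1 ≠ k := fun h => h2 (h ▸ hτL)
        rw [wheel_dist_some hm _ k h0k, wheel_dist_some hm _ k h1k] at hsep
        by_cases c1 : (k = i + 1 ∨ i = k + 1) <;> by_cases c2 : (k = i + 1 + 1 ∨ i + 1 = k + 1)
        · rw [if_pos c1, if_pos c2] at hsep; exact absurd rfl hsep
        · rcases c1 with c | c
          · exact absurd c.symm h1k
          · have : k = i - 1 := by linear_combination -c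
            rw [this]; exact Finset.mem_insert_self _ _
        · rcases c2 with c | c
          · have : k = i + 2 := by linear_combination c
            rw [this]; exact Finset.mem_insert.mpr (Or.inr (Finset.mem_singleton_self _))
          · exact absurd (show i = k from by linear_combination c) h0k
        · rw [if_neg c1, if_neg c2] at hsep; exact absurd rfl hsep
    have hpc : ({some (i - 1), some (i + 2)} : Finset (Option (ZMod m))).card ≤ 2 :=
      (Finset.card_insert_le _ _).trans (by simp)
    have heq := Finset.eq_of_subset_of_card_le hsub (hpc.trans hA)
    constructor
    · have : some (i - 1) ∈ (L.filter fun τ =>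
          (wheelGraph m).dist (some i) τ ≠ (wheelGraph m).dist (some (i + 1)) τ) := by
        rw [heq]; exact Finset.mem_insert_self _ _
      exact (Finset.mem_filter.mp this).1
    · have : some (i + 2) ∈ (L.filter fun τ =>
          (wheelGraph m).dist (some i) τ ≠ (wheelGraph m).dist (some (i + 1)) τ) := by
        rw [heq]; exact Finset.mem_insert.mpr (Or.inr (Finset.mem_singleton_self _))
      exact (Finset.mem_filter.mp this).1
  have key2 : some (i - 2) ∈ L := by
    by_contra hx
    have hB := hL (some (i - 2)) (some i)
      ((Option.some_injective _).ne (zne hm (-2) 0 (by decide) (by decide)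
        (by push_cast; ring) (by push_cast; ring))) hx h1
    have hsub : (L.filter fun τ =>
        (wheelGraph m).dist (some (i - 2)) τ ≠ (wheelGraph m).dist (some i) τ)
        ⊆ {some (i - 3)} := by
      intro τ hτ
      rw [Finset.mem_filter] at hτ
      obtain ⟨hτL, hsep⟩ := hτ
      rcases τ with _ | k
      · exact absurd (by rw [wheel_dist_none', wheel_dist_none']) hsep
      · have h2k : i - 2 ≠ k := fun h => hx (h ▸ hτL)
        have h0k : i ≠ k := fun h => h1 (h ▸ hτL)
        have h1k : i + 1 ≠ k := fun h => h2 (h ▸ hτL)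
        rw [wheel_dist_some hm _ k h2k, wheel_dist_some hm _ k h0k] at hsep
        by_cases c1 : (k = i - 2 + 1 ∨ i - 2 = k + 1) <;> by_cases c2 : (k = i + 1 ∨ i = k + 1)
        · rw [if_pos c1, if_pos c2] at hsep; exact absurd rfl hsep
        · rcases c1 with c | c
          · exact absurd (Or.inr (show i = k + 1 from by linear_combination -c)) c2
          · have : k = i - 3 := by linear_combination -c
            rw [this]; exact Finset.mem_singleton_self _
        · rcases c2 with c | c
          · exact absurd c.symm h1k
          · exact absurd (Or.inl (show k = i - 2 + 1 from by linear_combination -c)) c1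
        · rw [if_neg c1, if_neg c2] at hsep; exact absurd rfl hsep
    have hc := Finset.card_le_card hsub
    rw [Finset.card_singleton] at hc
    omega
  have key3 : some (i + 3) ∈ L := by
    by_contra hx
    have hB := hL (some (i + 1)) (some (i + 3))
      ((Option.some_injective _).ne (zne hm 1 3 (by decide) (by decide)
        (by push_cast; ring) (by push_cast; ring))) h2 hx
    have hsub : (L.filter fun τ =>
        (wheelGraph m).dist (some (i + 1)) τ ≠ (wheelGraph m).dist (some (i + 3)) τ)
        ⊆ {some (i + 4)} := by
      intro τ hτ
      rw [Finset.mem_filter] at hτ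
      obtain ⟨hτL, hsep⟩ := hτ
      rcases τ with _ | k
      · exact absurd (by rw [wheel_dist_none', wheel_dist_none']) hsep
      · have h1k : i + 1 ≠ k := fun h => h2 (h ▸ hτL)
        have h3k : i + 3 ≠ k := fun h => hx (h ▸ hτL)
        have h0k : i ≠ k := fun h => h1 (h ▸ hτL)
        rw [wheel_dist_some hm _ k h1k, wheel_dist_some hm _ k h3k] at hsep
        by_cases c1 : (k = i + 1 + 1 ∨ i + 1 = k + 1) <;>
          by_cases c2 : (k = i + 3 + 1 ∨ i + 3 = k + 1)
        · rw [if_pos c1, if_pos c2] at hsep; exact absurd rfl hsep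
        · rcases c1 with c | c
          · exact absurd (Or.inr (show i + 3 = k + 1 from by linear_combination -c)) c2
          · exact absurd (show i = k from by linear_combination c) h0k
        · rcases c2 with c | c
          · have : k = i + 4 := by linear_combination c
            rw [this]; exact Finset.mem_singleton_self _
          · exact absurd (Or.inl (show k = i + 1 + 1 from by linear_combination -c)) c1
        · rw [if_neg c1, if_neg c2] at hsep; exact absurd rfl hsep
    have hc := Finset.card_le_card hsub
    rw [Finset.card_singleton] at hc
    omega
  exact ⟨key2, key1.1, key1.2, key3⟩

lemma dist_one' (hm : 7 ≤ m) {j a : ZMod m} (h : a = j + 1 ∨ j = a + 1) (hja : j ≠ a) :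
    (wheelGraph m).dist (some j) (some a) = 1 := by
  rw [wheel_dist_some hm _ _ hja, if_pos h]

lemma dist_two (hm : 7 ≤ m) {j a : ZMod m} (hja : j ≠ a) (hno : ¬(a = j + 1 ∨ j = a + 1)) :
    (wheelGraph m).dist (some j) (some a) = 2 := by
  rw [wheel_dist_some hm _ _ hja, if_neg hno]

lemma hub_sep (hm : 7 ≤ m) (L : Finset (Option (ZMod m))) (hC : nlCond2 m L)
    (j : ZMod m) (hj : some j ∉ L) :
    2 ≤ (L.filter fun τ =>
      (wheelGraph m).dist none τ ≠ (wheelGraph m).dist (some j) τ).card := by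
  have ha : ∃ a : ZMod m, some a ∈ L ∧ (a = j + 2 ∨ a = j + 3) := by
    by_cases h : some (j + 2) ∈ L
    · exact ⟨j + 2, h, Or.inl rfl⟩
    · refine ⟨j + 3, ?_, Or.inr rfl⟩
      by_contra h3
      have := (hC (j + 2) h (by rw [show j + 2 + 1 = j + 3 from by ring]; exact h3)).1
      rw [show j + 2 - 2 = j from by ring] at this
      exact hj this
  have hb : ∃ b : ZMod m, some b ∈ L ∧ (b = j - 2 ∨ b = j - 3) := by
    by_cases h : some (j - 2) ∈ L
    · exact ⟨j - 2, h, Or.inl rfl⟩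
    · refine ⟨j - 3, ?_, Or.inr rfl⟩
      by_contra h3
      have := (hC (j - 3) h3 (by rw [show j - 3 + 1 = j - 2 from by ring]; exact h)).2.2.2
      rw [show j - 3 + 3 = j from by ring] at this
      exact hj this
  obtain ⟨a, haL, hav⟩ := ha
  obtain ⟨b, hbL, hbv⟩ := hb
  have hja : j ≠ a := by
    rcases hav with rfl | rfl
    · exact zneN hm j 0 2
    · exact zneN hm j 0 3
  have hnoa : ¬(a = j + 1 ∨ j = a + 1) := by
    rintro (h | h) <;> rcases hav with rfl | rfl
    · exact absurd h (zneN hm j 2 1)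
    · exact absurd h (zneN hm j 3 1)
    · exact absurd h (zneN hm j 0 3)
    · exact absurd h (zneN hm j 0 4)
  have hjb : j ≠ b := by
    rcases hbv with rfl | rfl
    · exact zneN hm j 0 (-2)
    · exact zneN hm j 0 (-3)
  have hnob : ¬(b = j + 1 ∨ j = b + 1) := by
    rintro (h | h) <;> rcases hbv with rfl | rfl
    · exact absurd h (zneN hm j (-2) 1)
    · exact absurd h (zneN hm j (-3) 1)
    · exact absurd h (zneN hm j 0 (-1))
    · exact absurd h (zneN hm j 0 (-2))
  have hab : some a ≠ some b := by
    apply (Option.some_injective _).ne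
    rcases hav with rfl | rfl <;> rcases hbv with rfl | rfl
    · exact zneN hm j 2 (-2)
    · exact zneN hm j 2 (-3)
    · exact zneN hm j 3 (-2)
    · exact zneN hm j 3 (-3)
  refine Finset.one_lt_card.mpr ⟨some a, Finset.mem_filter.mpr ⟨haL, ?_⟩,
    some b, Finset.mem_filter.mpr ⟨hbL, ?_⟩, hab⟩
  · rw [wheel_dist_none, dist_two hm hja hnoa]; omega
  · rw [wheel_dist_none, dist_two hm hjb hnob]; omega

lemma cyc_sep_consec (hm : 7 ≤ m) (L : Finset (Option (ZMod m))) (hC : nlCond2 m L)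
    (i : ZMod m) (h1 : some i ∉ L) (h2 : some (i + 1) ∉ L) :
    2 ≤ (L.filter fun τ =>
      (wheelGraph m).dist (some i) τ ≠ (wheelGraph m).dist (some (i + 1)) τ).card := by
  obtain ⟨-, hm1, hp2, -⟩ := hC i h1 h2
  refine Finset.one_lt_card.mpr ⟨some (i - 1), Finset.mem_filter.mpr ⟨hm1, ?_⟩,
    some (i + 2), Finset.mem_filter.mpr ⟨hp2, ?_⟩,
    (Option.some_injective _).ne (zneN hm i (-1) 2)⟩
  · rw [dist_one' hm (Or.inr (by ring)) (zneN hm i 0 (-1)),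
      dist_two hm (zneN hm i 1 (-1)) ?_]
    · omega
    · rintro (h | h)
      · exact absurd h (zneN hm i (-1) 2)
      · exact absurd h (zneN hm i 1 0)
  · rw [dist_two hm (zneN hm i 0 2) ?_, dist_one' hm (Or.inl (by ring)) (zneN hm i 1 2)]
    · omega
    · rintro (h | h)
      · exact absurd h (zneN hm i 2 1)
      · exact absurd h (zneN hm i 0 3)

lemma cyc_sep_skip (hm : 7 ≤ m) (L : Finset (Option (ZMod m))) (hC : nlCond2 m L)
    (i : ZMod m) (h1 : some i ∉ L) (h3 : some (i + 2) ∉ L) :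
    2 ≤ (L.filter fun τ =>
      (wheelGraph m).dist (some i) τ ≠ (wheelGraph m).dist (some (i + 2)) τ).card := by
  have hA : some (i - 1) ∈ L := by
    by_contra hx
    have := (hC (i - 1) hx (by rw [show i - 1 + 1 = i from by ring]; exact h1)).2.2.2
    rw [show i - 1 + 3 = i + 2 from by ring] at this
    exact h3 this
  have hB : some (i + 3) ∈ L := by
    by_contra hx
    have := (hC (i + 2) h3 (by rw [show i + 2 + 1 = i + 3 from by ring]; exact hx)).1
    rw [show i + 2 - 2 = i from by ring] at this
    exact h1 this
  refine Finset.one_lt_card.mpr ⟨some (i - 1), Finset.mem_filter.mpr ⟨hA, ?_⟩,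
    some (i + 3), Finset.mem_filter.mpr ⟨hB, ?_⟩,
    (Option.some_injective _).ne (zneN hm i (-1) 3)⟩
  · rw [dist_one' hm (Or.inr (by ring)) (zneN hm i 0 (-1)),
      dist_two hm (zneN hm i 2 (-1)) ?_]
    · omega
    · rintro (h | h)
      · exact absurd h (zneN hm i (-1) 3)
      · exact absurd h (zneN hm i 2 0)
  · rw [dist_two hm (zneN hm i 0 3) ?_, dist_one' hm (Or.inl (by ring)) (zneN hm i 2 3)]
    · omega
    · rintro (h | h)
      · exact absurd h (zneN hm i 3 1)
      · exact absurd h (zneN hm i 0 4)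

lemma cyc_sep_far (hm : 7 ≤ m) (L : Finset (Option (ZMod m))) (hC : nlCond2 m L)
    (i j : ZMod m) (hij : i ≠ j) (h1 : some i ∉ L) (h2 : some j ∉ L)
    (hn1 : j ≠ i + 1) (hn2 : i ≠ j + 1) (hn3 : j ≠ i + 2) (hn4 : i ≠ j + 2) :
    2 ≤ (L.filter fun τ =>
      (wheelGraph m).dist (some i) τ ≠ (wheelGraph m).dist (some j) τ).card := by
  have ha : ∃ a : ZMod m, some a ∈ L ∧ (a = i + 1 ∨ a = i - 1) := by
    by_cases h : some (i + 1) ∈ L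
    · exact ⟨i + 1, h, Or.inl rfl⟩
    · exact ⟨i - 1, (hC i h1 h).2.1, Or.inr rfl⟩
  have hb : ∃ b : ZMod m, some b ∈ L ∧ (b = j + 1 ∨ b = j - 1) := by
    by_cases h : some (j + 1) ∈ L
    · exact ⟨j + 1, h, Or.inl rfl⟩
    · exact ⟨j - 1, (hC j h2 h).2.1, Or.inr rfl⟩
  obtain ⟨a, haL, hav⟩ := ha
  obtain ⟨b, hbL, hbv⟩ := hb
  have hia : i ≠ a := by
    rcases hav with rfl | rfl
    · exact zneN hm i 0 1
    · exact zneN hm i 0 (-1)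
  have hadj_ia : a = i + 1 ∨ i = a + 1 := by
    rcases hav with rfl | rfl
    · exact Or.inl rfl
    · exact Or.inr (by ring)
  have hja : j ≠ a := by
    rcases hav with rfl | rfl
    · exact hn1
    · exact fun h => hn2 (by linear_combination -h)
  have hno_ja : ¬(a = j + 1 ∨ j = a + 1) := by
    rintro (h | h) <;> rcases hav with rfl | rfl
    · exact hij (by linear_combination h)
    · exact hn4 (by linear_combination h)
    · exact hn3 (by linear_combination h)
    · exact hij (by linear_combination -h)
  have hjb : j ≠ b := by
    rcases hbv with rfl | rfl
    · exact zneN hm j 0 1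
    · exact zneN hm j 0 (-1)
  have hadj_jb : b = j + 1 ∨ j = b + 1 := by
    rcases hbv with rfl | rfl
    · exact Or.inl rfl
    · exact Or.inr (by ring)
  have hib : i ≠ b := by
    rcases hbv with rfl | rfl
    · exact hn2
    · exact fun h => hn1 (by linear_combination -h)
  have hno_ib : ¬(b = i + 1 ∨ i = b + 1) := by
    rintro (h | h) <;> rcases hbv with rfl | rfl
    · exact hij (by linear_combination -h)
    · exact hn3 (by linear_combination h)
    · exact hn4 (by linear_combination h)
    · exact hij (by linear_combination h)
  have hab : some a ≠ some b := by
    apply (Option.some_injective _).ne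
    rcases hav with rfl | rfl <;> rcases hbv with rfl | rfl <;> intro h
    · exact hij (by linear_combination h)
    · exact hn3 (by linear_combination -h)
    · exact hn4 (by linear_combination h)
    · exact hij (by linear_combination h)
  refine Finset.one_lt_card.mpr ⟨some a, Finset.mem_filter.mpr ⟨haL, ?_⟩,
    some b, Finset.mem_filter.mpr ⟨hbL, ?_⟩, hab⟩
  · rw [dist_one' hm hadj_ia hia, dist_two hm hja hno_ja]; omega
  · rw [dist_two hm hib hno_ib, dist_one' hm hadj_jb hjb]; omega

lemma cond_to_landmark (hm : 7 ≤ m) (L : Finset (Option (ZMod m)))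
    (hC : nlCond2 m L) : isNLLandmark (wheelGraph m) 2 L := by
  intro u v huv hu hv
  rcases u with _ | i <;> rcases v with _ | j
  · exact absurd rfl huv
  · exact hub_sep hm L hC j hv
  · rw [show (L.filter fun τ =>
        (wheelGraph m).dist (some i) τ ≠ (wheelGraph m).dist none τ)
        = (L.filter fun τ =>
        (wheelGraph m).dist none τ ≠ (wheelGraph m).dist (some i) τ)
      from Finset.filter_congr fun x _ => ne_comm]
    exact hub_sep hm L hC i hu
  · have hij : i ≠ j := fun h => huv (by rw [h])
    by_cases e1 : j = i + 1
    · subst e1; exact cyc_sep_consec hm L hC i hu hv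
    · by_cases e2 : i = j + 1
      · subst e2
        rw [show (L.filter fun τ =>
            (wheelGraph m).dist (some (j + 1)) τ ≠ (wheelGraph m).dist (some j) τ)
            = (L.filter fun τ =>
            (wheelGraph m).dist (some j) τ ≠ (wheelGraph m).dist (some (j + 1)) τ)
          from Finset.filter_congr fun x _ => ne_comm]
        exact cyc_sep_consec hm L hC j hv hu
      · by_cases e3 : j = i + 2
        · subst e3; exact cyc_sep_skip hm L hC i hu hv
        · by_cases e4 : i = j + 2
          · subst e4
            rw [show (L.filter fun τ =>
                (wheelGraph m).dist (some (j + 2)) τ ≠ (wheelGraph m).dist (some j) τ)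
                = (L.filter fun τ =>
                (wheelGraph m).dist (some j) τ ≠ (wheelGraph m).dist (some (j + 2)) τ)
              from Finset.filter_congr fun x _ => ne_comm]
            exact cyc_sep_skip hm L hC j hv hu
          · exact cyc_sep_far hm L hC i j hij hu hv e1 e2 e3 e4

lemma cond_card (hm : 7 ≤ m) (L : Finset (Option (ZMod m))) (hC : nlCond2 m L) :
    m ≤ 2 * L.card := by
  haveI : NeZero m := ⟨by omega⟩
  classical
  have hTS : (Finset.univ.filter fun i : ZMod m => some i ∈ L).card
      + (Finset.univ.filter fun i : ZMod m => some i ∉ L).card = m := by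
    rw [Finset.card_filter_add_card_filter_not, Finset.card_univ, ZMod.card]
  have hS : (Finset.univ.filter fun i : ZMod m => some i ∈ L).card ≤ L.card := by
    apply Finset.card_le_card_of_injOn (fun i => some i)
    · intro i hi; exact (Finset.mem_filter.mp hi).2
    · intro x _ y _ h; exact Option.some_injective _ h
  have hT : (Finset.univ.filter fun i : ZMod m => some i ∉ L).card ≤ L.card := by
    apply Finset.card_le_card_of_injOn
      (fun i => if some (i + 1) ∈ L then some (i + 1) else some (i - 1))
    · intro i hi
      have hi' : some i ∉ L := (Finset.mem_filter.mp hi).2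
      by_cases h : some (i + 1) ∈ L
      · simpa [h]
      · have := (hC i hi' h).2.1
        simpa [h]
    · intro x hx y hy hxy
      have hx' : some x ∉ L := (Finset.mem_filter.mp hx).2
      have hy' : some y ∉ L := (Finset.mem_filter.mp hy).2
      by_cases h1 : some (x + 1) ∈ L <;> by_cases h2 : some (y + 1) ∈ L <;>
        simp only [h1, h2, if_true, if_false, if_pos, if_neg, not_false_iff,
          Option.some.injEq] at hxy
      · exact by linear_combination hxy
      · -- x + 1 = y - 1, so y = x + 2
        exfalso
        have hy2 : y = x + 2 := by linear_combination -hxy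
        have hx2 : some (x + 2) ∉ L := hy2 ▸ hy'
        have hx3 : some (x + 2 + 1) ∉ L := by
          rw [show x + 2 + 1 = y + 1 from by rw [hy2]]
          exact h2
        have := (hC (x + 2) hx2 hx3).1
        rw [show x + 2 - 2 = x from by ring] at this
        exact hx' this
      · -- x - 1 = y + 1, so x = y + 2
        exfalso
        have hx2 : x = y + 2 := by linear_combination hxy
        have hy2 : some (y + 2) ∉ L := hx2 ▸ hx'
        have hy3 : some (y + 2 + 1) ∉ L := by
          rw [show y + 2 + 1 = x + 1 from by rw [hx2]]
          exact h1
        have := (hC (y + 2) hy2 hy3).1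
        rw [show y + 2 - 2 = y from by ring] at this
        exact hy' this
      · exact by linear_combination hxy
  omega

def evenL (m : ℕ) : Finset (Option (ZMod m)) :=
  (Finset.range ((m + 1) / 2)).image fun k => some ((2 * k : ℕ) : ZMod m)

lemma evenL_mem (hm : 7 ≤ m) {t : ℕ} (ht : t < m) (he : t % 2 = 0) :
    some ((t : ℕ) : ZMod m) ∈ evenL m := by
  rw [evenL, Finset.mem_image]
  refine ⟨t / 2, Finset.mem_range.mpr (by omega), ?_⟩
  rw [show 2 * (t / 2) = t from by omega]

lemma evenL_card (hm : 7 ≤ m) : (evenL m).card = (m + 1) / 2 := by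
  haveI : NeZero m := ⟨by omega⟩
  rw [evenL, Finset.card_image_of_injOn, Finset.card_range]
  intro a ha b hb h
  simp only [Finset.coe_range, Set.mem_Iio] at ha hb
  have h' : ((2 * a : ℕ) : ZMod m) = ((2 * b : ℕ) : ZMod m) := Option.some_injective _ h
  have hval := congrArg ZMod.val h'
  rw [ZMod.val_natCast_of_lt (by omega), ZMod.val_natCast_of_lt (by omega)] at hval
  omega

lemma evenL_cond (hm : 7 ≤ m) : nlCond2 m (evenL m) := by
  haveI : NeZero m := ⟨by omega⟩
  intro i hi hi1
  exfalso
  have htm : i.val < m := ZMod.val_lt i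
  have hcast : ((i.val : ℕ) : ZMod m) = i := ZMod.natCast_rightInverse i
  by_cases he : i.val % 2 = 0
  · exact hi (hcast ▸ evenL_mem hm htm he)
  · by_cases h2 : i.val + 1 < m
    · apply hi1
      have hc : ((i.val + 1 : ℕ) : ZMod m) = i + 1 := by push_cast [hcast]; ring
      exact hc ▸ evenL_mem hm h2 (by omega)
    · apply hi1
      have hc : ((0 : ℕ) : ZMod m) = i + 1 := by
        have hmm1 : i.val + 1 = m := by omega
        calc ((0 : ℕ) : ZMod m) = ((m : ℕ) : ZMod m) := by rw [ZMod.natCast_self]; simp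
          _ = ((i.val + 1 : ℕ) : ZMod m) := by rw [hmm1]
          _ = i + 1 := by push_cast [hcast]; ring
      exact hc ▸ evenL_mem hm (by omega) (by omega)

end WheelAux

/-- For the complete wheel graph on `n ≥ 8` vertices: a set `L ⊆ C` of cycle vertices is
an NL `2`-landmark set if and only if it satisfies the NL `k = 2` condition; moreover the
minimum cardinality of an NL `2`-landmark set is `⌊n/2⌋`. -/
theorem stmt_18 (n : ℕ) (hn : 8 ≤ n) :
    (∀ L : Finset (Option (ZMod (n - 1))), none ∉ L →
      (isNLLandmark (wheelGraph (n - 1)) 2 L ↔ nlCond2 (n - 1) L)) ∧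
    IsLeast {m | ∃ L : Finset (Option (ZMod (n - 1))),
      isNLLandmark (wheelGraph (n - 1)) 2 L ∧ L.card = m} (n / 2) := by
  have hm : 7 ≤ n - 1 := by omega
  constructor
  · intro L _
    exact ⟨WheelAux.landmark_to_cond hm L, WheelAux.cond_to_landmark hm L⟩
  · constructor
    · exact ⟨WheelAux.evenL (n - 1),
        WheelAux.cond_to_landmark hm _ (WheelAux.evenL_cond hm),
        by rw [WheelAux.evenL_card hm]; omega⟩
    · rintro c ⟨L, hL, rfl⟩
      have := WheelAux.cond_card hm L (WheelAux.landmark_to_cond hm L hL)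
      omega
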